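/- For a quasigroup Q the following are equivalent: (i) Q₄ is anti-isotopic to Q; (ii) Q is isotopic to Q₁; (iii) Q₂ is isotopic to Q₃; (iv) Q₄ is isotopic to Q₅. -/
import Mathlib


def IsQuasigroup {Q : Type*} (m : Q → Q → Q) : Prop :=
  (∀ a, Function.Bijective (fun x => m a x)) ∧ (∀ a, Function.Bijective (fun x => m x a))

def Isotopic {Q : Type*} (m₁ m₂ : Q → Q → Q) : Prop :=
  ∃ α β γ : Q → Q, Function.Bijective α ∧ Function.Bijective β ∧ Function.Bijective γ ∧
    ∀ x y, m₂ (α x) (β y) = γ (m₁ x y)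

def AntiIsotopic {Q : Type*} (m₁ m₂ : Q → Q → Q) : Prop :=
  ∃ α β γ : Q → Q, Function.Bijective α ∧ Function.Bijective β ∧ Function.Bijective γ ∧
    ∀ x y, m₂ (α x) (β y) = γ (m₁ y x)

lemma iso_symm {Q : Type*} {m₁ m₂ : Q → Q → Q} (h : Isotopic m₁ m₂) : Isotopic m₂ m₁ := by
  obtain ⟨α, β, γ, hα, hβ, hγ, hiso⟩ := h
  let eα := Equiv.ofBijective α hα
  let eβ := Equiv.ofBijective β hβ
  let eγ := Equiv.ofBijective γ hγ
  refine ⟨eα.symm, eβ.symm, eγ.symm, eα.symm.bijective, eβ.symm.bijective,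
    eγ.symm.bijective, fun x y => ?_⟩
  apply eγ.injective
  have h1 : eγ (eγ.symm (m₂ x y)) = m₂ x y := eγ.apply_symm_apply _
  have h2 := hiso (eα.symm x) (eβ.symm y)
  have hax : α (eα.symm x) = x := eα.apply_symm_apply x
  have hby : β (eβ.symm y) = y := eβ.apply_symm_apply y
  show γ _ = eγ _
  rw [h1, ← h2, hax, hby]

theorem stmt_12 {Q : Type*} (m p1 p2 p3 p4 p5 : Q → Q → Q) (hq : IsQuasigroup m)
    (h1 : ∀ x y z, p1 x y = z ↔ m x z = y)
    (h2 : ∀ x y z, p2 x y = z ↔ m z y = x)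
    (h3 : ∀ x y z, p3 x y = z ↔ m z x = y)
    (h4 : ∀ x y z, p4 x y = z ↔ m y z = x)
    (h5 : ∀ x y, p5 x y = m y x) :
    (AntiIsotopic p4 m ↔ Isotopic m p1) ∧ (Isotopic m p1 ↔ Isotopic p2 p3) ∧
    (Isotopic p2 p3 ↔ Isotopic p4 p5) := by
  -- basic facts
  have hm1 : ∀ x y, m x (p1 x y) = y := fun x y => (h1 x y _).mp rfl
  have hp41 : ∀ x y, p4 y x = p1 x y := fun x y => (h4 y x _).mpr (hm1 x y)
  have hm2 : ∀ x y, m (p2 x y) y = x := fun x y => (h2 x y _).mp rfl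
  -- (i) ↔ (ii)
  have g1 : AntiIsotopic p4 m ↔ Isotopic m p1 := by
    constructor
    · rintro ⟨α, β, γ, hα, hβ, hγ, hiso⟩
      refine iso_symm ⟨α, β, γ, hα, hβ, hγ, fun x y => ?_⟩
      rw [hiso x y, hp41]
    · intro h
      obtain ⟨α, β, γ, hα, hβ, hγ, hiso⟩ := iso_symm h
      exact ⟨α, β, γ, hα, hβ, hγ, fun x y => by rw [hiso x y, hp41]⟩
  -- (ii) ↔ (iii)
  have g2 : Isotopic m p1 ↔ Isotopic p2 p3 := by
    constructor
    · rintro ⟨α, β, γ, hα, hβ, hγ, hiso⟩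
      refine ⟨γ, β, α, hγ, hβ, hα, fun w y => ?_⟩
      -- goal: p3 (γ w) (β y) = α (p2 w y)
      rw [h3]
      -- m (α (p2 w y)) (γ w) = β y
      have hx : m (p2 w y) y = w := hm2 w y
      have := hiso (p2 w y) y
      rw [hx] at this
      exact (h1 _ _ _).mp this
    · rintro ⟨α, β, γ, hα, hβ, hγ, hiso⟩
      refine ⟨γ, β, α, hγ, hβ, hα, fun w y => ?_⟩
      -- goal: p1 (γ w) (β y) = α (m w y)
      rw [h1]
      -- m (γ w) (α (m w y)) = β y
      have hx : p2 (m w y) y = w := (h2 _ _ _).mpr rfl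
      have := hiso (m w y) y
      rw [hx] at this
      exact (h3 _ _ _).mp this
  -- (ii) ↔ (iv)  (then combine with g2)
  have g4 : Isotopic m p1 ↔ Isotopic p4 p5 := by
    constructor
    · intro h
      obtain ⟨α, β, γ, hα, hβ, hγ, hiso⟩ := iso_symm h
      -- hiso : m (α x) (β y) = γ (p1 x y)
      refine ⟨β, α, γ, hβ, hα, hγ, fun x y => ?_⟩
      rw [h5, hiso y x, ← hp41]
    · rintro ⟨α, β, γ, hα, hβ, hγ, hiso⟩
      -- hiso : p5 (α x) (β y) = γ (p4 x y)
      refine iso_symm ⟨β, α, γ, hβ, hα, hγ, fun x y => ?_⟩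
      have := hiso y x
      rw [h5, hp41] at this
      exact this
  exact ⟨g1, g2, g2.symm.trans g4⟩
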